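/- For every k ∈ (0,1), the function f₃(p) = cn p · dn p · ((1-k²)p - 2E(p)) + (1+k²) sn p - 2k² sn³p is strictly positive for all p ∈ (0, K(k)), where sn, cn, dn are Jacobi elliptic functions with modulus k and E(p) = ∫₀ᵖ dn²t dt. -/

import Mathlib

/-!
The Jacobi system gives `sn² + cn² = 1` and `dn² + k² sn² = 1`, so `dn > 0` when `k < 1`.
As long as `cn > 0` on `[0, b]`, the substitution `θ = arcsin (sn x)` turns
`∫₀^{arcsin (sn b)} dθ / √(1 - k² sin² θ)` into `b`; at the first zero `p` of `cn` we have
`sn p = 1`, so `p = K(k)` and hence `cn > 0` on `[0, K)`. There `f₃ / (cn dn)` has derivative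
`(1 - k²)² sn² / (cn dn)² > 0` and vanishes at `0`, so it is positive on `(0, K)`, and so is `f₃`.
-/

open Real Set

theorem exists_first_zero {f : ℝ → ℝ} {a t : ℝ} (hat : a ≤ t) (hf : ContinuousOn f (Icc a t))
    (ha : 0 < f a) (ht : f t ≤ 0) : ∃ p ∈ Ioc a t, f p = 0 ∧ ∀ x ∈ Ico a p, 0 < f x := by
  set Z := Icc a t ∩ f ⁻¹' {0}
  have hZ : IsCompact Z := isCompact_Icc.of_isClosed_subset
    (hf.preimage_isClosed_of_isClosed isClosed_Icc isClosed_singleton) inter_subset_left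
  have hZne : Z.Nonempty := by
    obtain ⟨z, hz, hfz⟩ := intermediate_value_Icc' hat hf ⟨ht, ha.le⟩
    exact ⟨z, hz, hfz⟩
  obtain ⟨p, ⟨hp, hfp⟩, hmin⟩ := hZ.exists_isMinOn hZne continuousOn_id
  have hpa : a ≠ p := by rintro rfl; exact ha.ne' hfp
  refine ⟨p, ⟨lt_of_le_of_ne hp.1 hpa, hp.2⟩, hfp, fun x hx ↦ ?_⟩
  by_contra! hfx
  have hxt : x ≤ t := hx.2.le.trans hp.2
  obtain ⟨y, hy, hfy⟩ := intermediate_value_Icc' hx.1 (hf.mono (Icc_subset_Icc_right hxt))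
    ⟨hfx, ha.le⟩
  have : p ≤ y := hmin ⟨⟨hy.1, hy.2.trans hxt⟩, hfy⟩
  linarith [hy.2, hx.2]

noncomputable def completeEllipticK (k : ℝ) : ℝ :=
  ∫ θ in (0:ℝ)..π / 2, 1 / √(1 - k ^ 2 * sin θ ^ 2)

structure IsJacobiElliptic (k : ℝ) (sn cn dn : ℝ → ℝ) : Prop where
  sn_zero : sn 0 = 0
  cn_zero : cn 0 = 1
  dn_zero : dn 0 = 1
  hasDerivAt_sn (t : ℝ) : HasDerivAt sn (cn t * dn t) t
  hasDerivAt_cn (t : ℝ) : HasDerivAt cn (-(sn t * dn t)) t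
  hasDerivAt_dn (t : ℝ) : HasDerivAt dn (-(k ^ 2 * sn t * cn t)) t

def f3 (k : ℝ) (sn cn dn E : ℝ → ℝ) (p : ℝ) : ℝ :=
  cn p * dn p * ((1 - k ^ 2) * p - 2 * E p) + (1 + k ^ 2) * sn p - 2 * k ^ 2 * sn p ^ 3

theorem hasDerivAt_f3_div {k x : ℝ} {sn cn dn E : ℝ → ℝ}
    (hsn : HasDerivAt sn (cn x * dn x) x) (hcn : HasDerivAt cn (-(sn x * dn x)) x)
    (hdn : HasDerivAt dn (-(k ^ 2 * sn x * cn x)) x) (hE : HasDerivAt E (dn x ^ 2) x)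
    (hcn_sq : sn x ^ 2 + cn x ^ 2 = 1) (hdn_sq : dn x ^ 2 + k ^ 2 * sn x ^ 2 = 1)
    (hx : cn x * dn x ≠ 0) :
    HasDerivAt (fun p ↦ f3 k sn cn dn E p / (cn p * dn p))
      ((1 - k ^ 2) ^ 2 * sn x ^ 2 / (cn x * dn x) ^ 2) x := by
  have hf3 := (((hcn.mul hdn).mul (((hasDerivAt_id x).const_mul (1 - k ^ 2)).sub
    (hE.const_mul 2))).add (hsn.const_mul (1 + k ^ 2))).sub ((hsn.fun_pow 3).const_mul (2 * k ^ 2))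
  refine (hf3.div (hcn.mul hdn) hx).congr_deriv ?_
  congr 1
  simp only [Pi.mul_apply, Pi.add_apply, Pi.sub_apply, id]
  push_cast
  linear_combination
    (k ^ 2 * sn x ^ 2 * (k ^ 2 - 3 + 2 * k ^ 2 * sn x ^ 2)
      + (dn x ^ 2 - 1 + k ^ 2 * sn x ^ 2) * (-(4 * k ^ 2 * sn x ^ 2) - 2 * dn x ^ 2)) * hcn_sq
    + ((1 - sn x ^ 2) * (-(4 * k ^ 2 * sn x ^ 2) - 2 * dn x ^ 2)
      + sn x ^ 2 * (1 + k ^ 2 - 2 * k ^ 2 * sn x ^ 2)) * hdn_sq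

namespace IsJacobiElliptic

variable {k : ℝ} {sn cn dn : ℝ → ℝ}

theorem continuous_sn (h : IsJacobiElliptic k sn cn dn) : Continuous sn :=
  continuous_iff_continuousAt.2 fun t ↦ (h.hasDerivAt_sn t).continuousAt

theorem continuous_cn (h : IsJacobiElliptic k sn cn dn) : Continuous cn :=
  continuous_iff_continuousAt.2 fun t ↦ (h.hasDerivAt_cn t).continuousAt

theorem continuous_dn (h : IsJacobiElliptic k sn cn dn) : Continuous dn :=
  continuous_iff_continuousAt.2 fun t ↦ (h.hasDerivAt_dn t).continuousAt

theorem sn_sq_add_cn_sq (h : IsJacobiElliptic k sn cn dn) (t : ℝ) : sn t ^ 2 + cn t ^ 2 = 1 := by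
  have hderiv (x : ℝ) : HasDerivAt (fun t ↦ sn t ^ 2 + cn t ^ 2) 0 x := by
    refine (((h.hasDerivAt_sn x).fun_pow 2).add ((h.hasDerivAt_cn x).fun_pow 2)).congr_deriv ?_
    push_cast
    ring
  simpa [h.sn_zero, h.cn_zero] using is_const_of_deriv_eq_zero
    (fun x ↦ (hderiv x).differentiableAt) (fun x ↦ (hderiv x).deriv) t 0

theorem dn_sq_add_sq_mul_sn_sq (h : IsJacobiElliptic k sn cn dn) (t : ℝ) :
    dn t ^ 2 + k ^ 2 * sn t ^ 2 = 1 := by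
  have hderiv (x : ℝ) : HasDerivAt (fun t ↦ dn t ^ 2 + k ^ 2 * sn t ^ 2) 0 x := by
    refine (((h.hasDerivAt_dn x).fun_pow 2).add
      (((h.hasDerivAt_sn x).fun_pow 2).const_mul (k ^ 2))).congr_deriv ?_
    push_cast
    ring
  simpa [h.sn_zero, h.dn_zero] using is_const_of_deriv_eq_zero
    (fun x ↦ (hderiv x).differentiableAt) (fun x ↦ (hderiv x).deriv) t 0

theorem sn_sq_le_one (h : IsJacobiElliptic k sn cn dn) (t : ℝ) : sn t ^ 2 ≤ 1 := by
  nlinarith [h.sn_sq_add_cn_sq t, sq_nonneg (cn t)]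

theorem dn_eq_sqrt (h : IsJacobiElliptic k sn cn dn) (hk : k ^ 2 < 1) (t : ℝ) :
    dn t = √(1 - k ^ 2 * sn t ^ 2) := by
  have hpos (x : ℝ) : 0 < 1 - k ^ 2 * sn x ^ 2 := by
    nlinarith [h.sn_sq_le_one x, sq_nonneg k]
  have hroot_cont : Continuous fun x ↦ √(1 - k ^ 2 * sn x ^ 2) := by
    have := h.continuous_sn
    fun_prop
  rcases isPreconnected_univ.eq_or_eq_neg_of_sq_eq h.continuous_dn.continuousOn
      hroot_cont.continuousOn (fun x _ ↦ by
        simp only [Pi.pow_apply]; rw [sq_sqrt (hpos x).le]; linarith [h.dn_sq_add_sq_mul_sn_sq x])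
      (fun {x} _ ↦ (sqrt_pos.2 (hpos x)).ne') with hdn | hdn
  · exact hdn (mem_univ t)
  · have h0 := hdn (mem_univ 0)
    have := sqrt_nonneg (1 - k ^ 2 * sn 0 ^ 2)
    simp only [Pi.neg_apply, h.dn_zero] at h0
    linarith

theorem dn_pos (h : IsJacobiElliptic k sn cn dn) (hk : k ^ 2 < 1) (t : ℝ) : 0 < dn t := by
  rw [h.dn_eq_sqrt hk]
  exact sqrt_pos.2 (by nlinarith [h.sn_sq_le_one t, sq_nonneg k])

theorem sn_strictMonoOn (h : IsJacobiElliptic k sn cn dn) (hk : k ^ 2 < 1) {b : ℝ}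
    (hcn_pos : ∀ x ∈ Ioo 0 b, 0 < cn x) : StrictMonoOn sn (Icc 0 b) := by
  refine strictMonoOn_of_hasDerivWithinAt_pos (convex_Icc 0 b) h.continuous_sn.continuousOn
    (fun x _ ↦ (h.hasDerivAt_sn x).hasDerivWithinAt) ?_
  rw [interior_Icc]
  exact fun x hx ↦ mul_pos (hcn_pos x hx) (h.dn_pos hk x)

theorem sn_pos (h : IsJacobiElliptic k sn cn dn) (hk : k ^ 2 < 1) {b : ℝ} (hb : 0 < b)
    (hcn_pos : ∀ x ∈ Ioo 0 b, 0 < cn x) : 0 < sn b :=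
  h.sn_zero ▸ h.sn_strictMonoOn hk hcn_pos (left_mem_Icc.2 hb.le) (right_mem_Icc.2 hb.le) hb

/-- The substitution `θ = arcsin (sn x)`, `dθ = dn x dx`: `sn` inverts the incomplete elliptic
integral of the first kind. -/
theorem integral_arcsin_sn (h : IsJacobiElliptic k sn cn dn) (hk : k ^ 2 < 1) {b : ℝ}
    (hb : 0 ≤ b) (hcn_pos : ∀ x ∈ Ioo 0 b, 0 < cn x) :
    ∫ θ in (0:ℝ)..arcsin (sn b), 1 / √(1 - k ^ 2 * sin θ ^ 2) = b := by
  have hsn_abs (x : ℝ) : |sn x| ≤ 1 := sq_le_one_iff_abs_le_one _ |>.1 (h.sn_sq_le_one x)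
  have hsin (x : ℝ) : sin (arcsin (sn x)) = sn x :=
    sin_arcsin (abs_le.1 (hsn_abs x)).1 (abs_le.1 (hsn_abs x)).2
  have hradicand (θ : ℝ) : 0 < 1 - k ^ 2 * sin θ ^ 2 := by
    nlinarith [sin_sq_le_one θ, sq_nonneg k, sq_nonneg (sin θ)]
  have hderiv (x : ℝ) (hx : x ∈ Ioo 0 b) : HasDerivAt (arcsin ∘ sn) (dn x) x := by
    have hcn_sq : cn x ^ 2 = 1 - sn x ^ 2 := by linarith [h.sn_sq_add_cn_sq x]
    have hsn_lt : sn x ^ 2 < 1 := by nlinarith [hcn_pos x hx]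
    refine ((hasDerivAt_arcsin (by nlinarith) (by nlinarith)).comp x
      (h.hasDerivAt_sn x)).congr_deriv ?_
    rw [← hcn_sq, sqrt_sq (hcn_pos x hx).le]
    field_simp [(hcn_pos x hx).ne']
  have hsubst := intervalIntegral.integral_deriv_smul_comp'' (a := 0) (b := b)
    (g := fun θ ↦ 1 / √(1 - k ^ 2 * sin θ ^ 2))
    (continuous_arcsin.comp h.continuous_sn).continuousOn
    (fun x hx ↦ (hderiv x (by simpa [hb] using hx)).hasDerivWithinAt) h.continuous_dn.continuousOn
    (Continuous.continuousOn <| continuous_const.div (by fun_prop)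
      fun θ ↦ (sqrt_pos.2 (hradicand θ)).ne')
  rw [Function.comp_apply, Function.comp_apply, h.sn_zero, arcsin_zero] at hsubst
  rw [← hsubst, intervalIntegral.integral_congr (g := fun _ ↦ 1), intervalIntegral.integral_const,
    smul_eq_mul, mul_one, sub_zero]
  intro x _
  simp only [Function.comp_apply, smul_eq_mul, hsin, ← h.dn_eq_sqrt hk]
  field_simp [(h.dn_pos hk x).ne']

theorem cn_pos (h : IsJacobiElliptic k sn cn dn) (hk : k ^ 2 < 1) {t : ℝ}
    (ht : t ∈ Ico 0 (completeEllipticK k)) : 0 < cn t := by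
  by_contra! hcn_t
  obtain ⟨p, ⟨hp0, hpt⟩, hcn_p, hcn_pos⟩ := exists_first_zero ht.1 h.continuous_cn.continuousOn
    (h.cn_zero ▸ one_pos) hcn_t
  have hsn_p : sn p = 1 := by
    have hsn_pos := h.sn_pos hk hp0 fun x hx ↦ hcn_pos x ⟨hx.1.le, hx.2⟩
    nlinarith [h.sn_sq_add_cn_sq p]
  have hKp : completeEllipticK k = p := by
    have := h.integral_arcsin_sn hk hp0.le fun x hx ↦ hcn_pos x ⟨hx.1.le, hx.2⟩
    rwa [hsn_p, arcsin_one] at this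
  linarith [ht.2]

theorem f3_pos_of_cn_pos (h : IsJacobiElliptic k sn cn dn) (hk : k ^ 2 < 1) {E : ℝ → ℝ}
    (hE0 : E 0 = 0) (hE : ∀ t, HasDerivAt E (dn t ^ 2) t) {p : ℝ} (hp : 0 < p)
    (hcn_pos : ∀ x ∈ Icc 0 p, 0 < cn x) : 0 < f3 k sn cn dn E p := by
  have hcd_pos (x : ℝ) (hx : x ∈ Icc 0 p) : 0 < cn x * dn x :=
    mul_pos (hcn_pos x hx) (h.dn_pos hk x)
  have hderiv (x : ℝ) (hx : x ∈ Icc 0 p) := hasDerivAt_f3_div (h.hasDerivAt_sn x)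
    (h.hasDerivAt_cn x) (h.hasDerivAt_dn x) (hE x) (h.sn_sq_add_cn_sq x)
    (h.dn_sq_add_sq_mul_sn_sq x) (hcd_pos x hx).ne'
  have hmono : StrictMonoOn (fun x ↦ f3 k sn cn dn E x / (cn x * dn x)) (Icc 0 p) := by
    refine strictMonoOn_of_hasDerivWithinAt_pos (convex_Icc 0 p)
      (f' := fun x ↦ (1 - k ^ 2) ^ 2 * sn x ^ 2 / (cn x * dn x) ^ 2)
      (fun x hx ↦ (hderiv x hx).continuousAt.continuousWithinAt) ?_ ?_ <;> rw [interior_Icc]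
    · exact fun x hx ↦ (hderiv x (Ioo_subset_Icc_self hx)).hasDerivWithinAt
    · intro x hx
      have hsn := h.sn_pos hk hx.1 fun y hy ↦ hcn_pos y ⟨hy.1.le, hy.2.le.trans hx.2.le⟩
      exact div_pos (by positivity) (pow_pos (hcd_pos x (Ioo_subset_Icc_self hx)) 2)
  have hzero : f3 k sn cn dn E 0 / (cn 0 * dn 0) = 0 := by
    simp [f3, h.sn_zero, h.cn_zero, h.dn_zero, hE0]
  have hquot : 0 < f3 k sn cn dn E p / (cn p * dn p) :=
    hzero ▸ hmono (left_mem_Icc.2 hp.le) (right_mem_Icc.2 hp.le) hp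
  have hcd := hcd_pos p (right_mem_Icc.2 hp.le)
  simpa [div_mul_cancel₀ _ hcd.ne'] using mul_pos hquot hcd

end IsJacobiElliptic

/-- Positivity of `f₃` on `(0, K(k))` (spacelike case, domain `C₃`). -/
theorem f3_pos
    (k : ℝ) (hk : k ∈ Set.Ioo (0:ℝ) 1)
    (sn cn dn : ℝ → ℝ)
    (hsn0 : sn 0 = 0) (hcn0 : cn 0 = 1) (hdn0 : dn 0 = 1)
    (hsn : ∀ t, HasDerivAt sn (cn t * dn t) t)
    (hcn : ∀ t, HasDerivAt cn (-(sn t * dn t)) t)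
    (hdn : ∀ t, HasDerivAt dn (-(k ^ 2 * sn t * cn t)) t)
    (K : ℝ)
    (hK : K = ∫ t in (0:ℝ)..(Real.pi / 2), 1 / Real.sqrt (1 - k ^ 2 * Real.sin t ^ 2))
    (E : ℝ → ℝ) (hE : ∀ p, E p = ∫ t in (0:ℝ)..p, dn t ^ 2) :
    ∀ p ∈ Set.Ioo 0 K,
      0 < cn p * dn p * ((1 - k ^ 2) * p - 2 * E p)
          + (1 + k ^ 2) * sn p - 2 * k ^ 2 * sn p ^ 3 := by
  intro p hp
  have hk2 : k ^ 2 < 1 := by nlinarith [hk.1, hk.2]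
  have h : IsJacobiElliptic k sn cn dn := ⟨hsn0, hcn0, hdn0, hsn, hcn, hdn⟩
  have hE' (t : ℝ) : HasDerivAt E (dn t ^ 2) t := by
    rw [funext hE]
    exact ((h.continuous_dn.pow 2).integral_hasStrictDerivAt 0 t).hasDerivAt
  have hpK : p < completeEllipticK k := by rw [completeEllipticK, ← hK]; exact hp.2
  exact h.f3_pos_of_cn_pos hk2 (by simp [hE]) hE' hp.1
    fun x hx ↦ h.cn_pos hk2 ⟨hx.1, hx.2.trans_lt hpK⟩
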